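/- arXiv:2210.12406 — 3 statements merged into one kernel-verified Lean document; each statement's English description precedes it below -/
import Mathlib

section
/- If ω commutes with a Hermitian matrix H, then the curve t ↦ e^{tA} ω e^{−tA} has vanishing first derivative of tr(H ·) at t = 0 for every matrix A; conversely, if ω is a pure state and tr(A[ω,H]) = 0 for all A ∈ su(n), then ω is an eigenprojection of H (i.e., Hω = λω for some real λ). -/
/-!
Differentiating `t ↦ e^{tA} ω e^{-tA}` at `0` gives `[A, ω]`, and cyclicity of the trace turns
`tr (H [A, ω])` into `tr (A [ω, H])`; this vanishes when `ω` and `H` commute.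

Conversely, `C = [ω, H]` is itself skew-Hermitian and traceless, so the hypothesis applied to
`A = C` gives `tr (C C) = -tr (Cᴴ C) = 0`, whence `C = 0`. An idempotent of trace `1` has a
one-dimensional range, which the commuting `H` preserves and therefore acts on as a scalar `c`,
so `H ω = c ω`. Taking traces, `c = tr (H ω)`, which is real as a trace of a product of two
Hermitian matrices.
-/

open Matrix NormedSpace
open scoped ComplexOrder

theorem hasDerivAt_exp_smul_mul_mul_exp_neg_smul {𝕂 𝔸 : Type*} [RCLike 𝕂] [NormedRing 𝔸]
    [NormedAlgebra 𝕂 𝔸] [CompleteSpace 𝔸] (A ω : 𝔸) :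
    HasDerivAt (fun t : 𝕂 => exp (t • A) * ω * exp (-(t • A))) (A * ω - ω * A) 0 := by
  have h := ((hasDerivAt_exp_smul_const A (0 : 𝕂)).mul_const ω).mul
    (hasDerivAt_exp_smul_const (-A) (0 : 𝕂))
  simp only [smul_neg, zero_smul, neg_zero, exp_zero, one_mul, mul_neg] at h
  exact h.congr_deriv (by noncomm_ring)

theorem LinearMap.exists_comp_eq_smul_of_commute_of_finrank_range_eq_one {K V : Type*} [Field K]
    [AddCommGroup V] [Module K V] {T e : V →ₗ[K] V} (hTe : Commute T e)
    (he : Module.finrank K (range e) = 1) : ∃ c : K, T ∘ₗ e = c • e := by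
  have hT : ∀ x ∈ range e, T x ∈ range e := by
    rintro _ ⟨y, rfl⟩
    exact ⟨T y, (LinearMap.congr_fun hTe y).symm⟩
  obtain ⟨c, hc, -⟩ := (T.restrict hT).existsUnique_eq_smul_id_of_finrank_eq_one he
  refine ⟨c, LinearMap.ext fun x => ?_⟩
  simpa using congr_arg Subtype.val (LinearMap.congr_fun hc ⟨e x, mem_range_self e x⟩)

namespace Matrix

variable {m : Type*} [Fintype m]

theorem hasDerivAt_trace_mul_exp_smul_conj [DecidableEq m] {𝕜 : Type*} [RCLike 𝕜]
    (H A ω : Matrix m m 𝕜) :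
    HasDerivAt (fun t : ℝ => (H * (exp (t • A) * ω * exp (-(t • A)))).trace)
      (A * (ω * H - H * ω)).trace 0 := by
  let := Matrix.linftyOpNormedRing (n := m) (α := 𝕜)
  let := Matrix.linftyOpNormedAlgebra (R := ℝ) (n := m) (α := 𝕜)
  have h := (traceLinearMap m ℝ 𝕜).toContinuousLinearMap.hasFDerivAt.comp_hasDerivAt 0
    ((hasDerivAt_exp_smul_mul_mul_exp_neg_smul A ω).const_mul H)
  refine h.congr_deriv ?_
  change (H * (A * ω - ω * A)).trace = _
  rw [mul_sub, mul_sub, trace_sub, trace_sub, ← mul_assoc, ← mul_assoc, ← mul_assoc, ← mul_assoc,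
    trace_mul_cycle A ω H, trace_mul_cycle A H ω, trace_mul_cycle ω A H]

section StarOrdered

variable {R : Type*} [PartialOrder R] [CommRing R] [StarRing R] [StarOrderedRing R]
  [NoZeroDivisors R]

theorem eq_zero_of_conjTranspose_eq_neg_of_trace_mul_self_eq_zero {C : Matrix m m R}
    (hC : Cᴴ = -C) (h : (C * C).trace = 0) : C = 0 :=
  trace_conjTranspose_mul_self_eq_zero_iff.mp (by rw [hC, neg_mul, trace_neg, h, neg_zero])

theorem IsHermitian.commute_of_forall_trace_mul_sub_eq_zero {H ω : Matrix m m R}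
    (hH : H.IsHermitian) (hω : ω.IsHermitian)
    (hcrit : ∀ A : Matrix m m R, Aᴴ = -A → A.trace = 0 → (A * (ω * H - H * ω)).trace = 0) :
    Commute H ω := by
  have hskew : (ω * H - H * ω)ᴴ = -(ω * H - H * ω) := by
    rw [conjTranspose_sub, conjTranspose_mul, conjTranspose_mul, hH.eq, hω.eq, neg_sub]
  have htr : (ω * H - H * ω).trace = 0 := by rw [trace_sub, trace_mul_comm, sub_self]
  exact (sub_eq_zero.mp (eq_zero_of_conjTranspose_eq_neg_of_trace_mul_self_eq_zero hskew
    (hcrit _ hskew htr))).symm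

end StarOrdered

theorem exists_mul_eq_smul_of_commute_of_trace_eq_one [DecidableEq m] {K : Type*} [Field K]
    [CharZero K] {T ω : Matrix m m K} (hTω : Commute T ω) (hω : IsIdempotentElem ω)
    (htr : ω.trace = 1) : ∃ c : K, T * ω = c • ω := by
  have hrank : Module.finrank K (LinearMap.range (toLinAlgEquiv' ω)) = 1 := by
    have := (LinearMap.IsIdempotentElem.isProj_range _ (hω.map toLinAlgEquiv')).trace
    change LinearMap.trace K _ (toLin' ω) = _ at this
    rw [trace_toLin'_eq, htr] at this
    exact_mod_cast this.symm
  obtain ⟨c, hc⟩ := LinearMap.exists_comp_eq_smul_of_commute_of_finrank_range_eq_one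
    (hTω.map toLinAlgEquiv') hrank
  refine ⟨c, toLinAlgEquiv'.injective ?_⟩
  rwa [map_mul, map_smul]

variable {𝕜 : Type*} [RCLike 𝕜]

theorem IsHermitian.star_trace_mul {A B : Matrix m m 𝕜} (hA : A.IsHermitian)
    (hB : B.IsHermitian) : star (A * B).trace = (A * B).trace := by
  rw [← trace_conjTranspose, conjTranspose_mul, hA.eq, hB.eq, trace_mul_comm]

theorem IsHermitian.exists_mul_eq_real_smul_of_commute [DecidableEq m] {H ω : Matrix m m 𝕜}
    (hH : H.IsHermitian) (hω : ω.IsHermitian) (hHω : Commute H ω) (hproj : IsIdempotentElem ω)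
    (htr : ω.trace = 1) : ∃ lam : ℝ, H * ω = (lam : 𝕜) • ω := by
  obtain ⟨c, hc⟩ := exists_mul_eq_smul_of_commute_of_trace_eq_one hHω hproj htr
  have hc_trace : (H * ω).trace = c := by rw [hc, trace_smul, htr, smul_eq_mul, mul_one]
  refine ⟨RCLike.re c, ?_⟩
  rw [RCLike.conj_eq_iff_re.mp (hc_trace ▸ hH.star_trace_mul hω), hc]

end Matrix

/-- If `ω` commutes with a Hermitian `H`, the curve `t ↦ e^{tA} ω e^{−tA}` has
vanishing first derivative of `tr (H ·)` at `t = 0` for every matrix `A`; conversely, if `ω`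
is a pure state and `tr (A [ω, H]) = 0` for all `A ∈ su(n)`, then `ω` is an eigenprojection
of `H`. -/
theorem critical_point_characterization {n : ℕ}
    (H ω : Matrix (Fin n) (Fin n) ℂ)
    (hH : H.IsHermitian)
    (hω_psd : ω.PosSemidef) (hω_tr : ω.trace = 1) :
    (ω * H = H * ω →
      ∀ A : Matrix (Fin n) (Fin n) ℂ,
        deriv (fun t : ℝ =>
          (H * (NormedSpace.exp (t • A) * ω * NormedSpace.exp (-(t • A)))).trace) 0 = 0) ∧
    (ω * ω = ω →
      (∀ A : Matrix (Fin n) (Fin n) ℂ, Aᴴ = -A → A.trace = 0 →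
        (A * (ω * H - H * ω)).trace = 0) →
      ∃ lam : ℝ, H * ω = (lam : ℂ) • ω) := by
  refine ⟨fun hcomm A => ?_, fun hproj hcrit => ?_⟩
  · rw [(hasDerivAt_trace_mul_exp_smul_conj H A ω).deriv, hcomm, sub_self, mul_zero, trace_zero]
  · have hω := hω_psd.isHermitian
    exact hH.exists_mul_eq_real_smul_of_commute hω
      (hH.commute_of_forall_trace_mul_sub_eq_zero hω hcrit) hproj hω_tr
end

section
/- For a rank-one projection ω = |ψ⟩⟨ψ| with Hψ = λψ (H Hermitian) and any skew-Hermitian A, the second derivative at t = 0 of t ↦ tr(e^{tA} ω e^{−tA} H) equals 2(⟨Aψ, H Aψ⟩ − λ⟨Aψ, Aψ⟩). -/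
/-!
Differentiating the conjugation `t ↦ e^{tA} B e^{-tA}` gives `e^{tA} [A, B] e^{-tA}`, so the
second derivative at `0` is `tr ([A, [A, ω]] H)`. For `ω = |ψ⟩⟨ψ|` this expands into expectations
in `ψ`, which are evaluated with `⟨ψ| H = λ ⟨ψ|` and `⟨ψ| A = -⟨Aψ|`.
-/

open Matrix NormedSpace

section BanachAlgebra

variable {𝔸 F : Type*} [NormedRing 𝔸] [NormedAlgebra ℝ 𝔸] [CompleteSpace 𝔸]
  [NormedAddCommGroup F] [NormedSpace ℝ F]

theorem hasDerivAt_exp_smul_mul_mul_exp_neg_smul_s3 (a b : 𝔸) (t : ℝ) :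
    HasDerivAt (fun u : ℝ => exp (u • a) * b * exp (-(u • a)))
      (exp (t • a) * (a * b - b * a) * exp (-(t • a))) t := by
  have h := ((hasDerivAt_exp_smul_const a t).mul_const b).mul
    (hasDerivAt_exp_smul_const' (-a) t)
  simp only [smul_neg] at h
  exact h.congr_deriv (by noncomm_ring)

theorem deriv_clm_exp_smul_mul_mul_exp_neg_smul (L : 𝔸 →L[ℝ] F) (a b : 𝔸) :
    deriv (fun u : ℝ => L (exp (u • a) * b * exp (-(u • a))))
      = fun u => L (exp (u • a) * (a * b - b * a) * exp (-(u • a))) :=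
  funext fun t => (L.hasFDerivAt.comp_hasDerivAt t
    (hasDerivAt_exp_smul_mul_mul_exp_neg_smul_s3 a b t)).deriv

theorem deriv_deriv_clm_exp_smul_mul_mul_exp_neg_smul_zero (L : 𝔸 →L[ℝ] F) (a b : 𝔸) :
    deriv (deriv fun u : ℝ => L (exp (u • a) * b * exp (-(u • a)))) 0
      = L (a * (a * b - b * a) - (a * b - b * a) * a) := by
  simp [deriv_clm_exp_smul_mul_mul_exp_neg_smul]

end BanachAlgebra

section Matrix

variable {m 𝕜 : Type*} [Fintype m] [RCLike 𝕜]

theorem deriv_deriv_trace_exp_smul_mul_mul_exp_neg_smul_mul_zero [DecidableEq m]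
    (A B C : Matrix m m 𝕜) :
    deriv (deriv fun t : ℝ => (exp (t • A) * B * exp (-(t • A)) * C).trace) 0
      = ((A * (A * B - B * A) - (A * B - B * A) * A) * C).trace := by
  -- Any matrix norm will do: `exp` only depends on the topology, which all of them induce.
  let _ : NormedRing (Matrix m m 𝕜) := Matrix.linftyOpNormedRing
  let _ : NormedAlgebra ℝ (Matrix m m 𝕜) := Matrix.linftyOpNormedAlgebra
  let L : Matrix m m 𝕜 →L[ℝ] 𝕜 := LinearMap.toContinuousLinearMap
    ((traceLinearMap m 𝕜 𝕜).restrictScalars ℝ ∘ₗ (LinearMap.mulRight ℝ C))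
  exact deriv_deriv_clm_exp_smul_mul_mul_exp_neg_smul_zero L A B

theorem trace_mul_vecMulVec_mul (M N : Matrix m m 𝕜) (u v : m → 𝕜) :
    (M * vecMulVec u v * N).trace = v ⬝ᵥ (N * M) *ᵥ u := by
  rw [trace_mul_cycle, mul_vecMulVec, trace_vecMulVec, dotProduct_comm]

theorem star_mulVec_of_conjTranspose_eq_neg {A : Matrix m m 𝕜} (hA : Aᴴ = -A) (v : m → 𝕜) :
    star (A *ᵥ v) = -(star v ᵥ* A) := by
  rw [star_mulVec, hA, vecMul_neg]

theorem Matrix.IsHermitian.star_vecMul_of_mulVec_eq_smul {H : Matrix m m 𝕜} (hH : H.IsHermitian)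
    {v : m → 𝕜} {lam : ℝ} (heig : H *ᵥ v = (lam : 𝕜) • v) :
    star v ᵥ* H = (lam : 𝕜) • star v := by
  rw [← hH.eq, ← star_mulVec, heig, star_smul, RCLike.star_def, RCLike.conj_ofReal]

theorem trace_double_commutator_vecMulVec_mul_of_mulVec_eq_smul [DecidableEq m]
    {H A : Matrix m m 𝕜} {ψ : m → 𝕜} {lam : ℝ} (hH : H.IsHermitian)
    (heig : H *ᵥ ψ = (lam : 𝕜) • ψ) (hA : Aᴴ = -A) :
    ((A * (A * vecMulVec ψ (star ψ) - vecMulVec ψ (star ψ) * A)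
        - (A * vecMulVec ψ (star ψ) - vecMulVec ψ (star ψ) * A) * A) * H).trace
      = 2 * (star (A *ᵥ ψ) ⬝ᵥ (H *ᵥ (A *ᵥ ψ)) - (lam : 𝕜) * (star (A *ᵥ ψ) ⬝ᵥ (A *ᵥ ψ))) := by
  set ω := vecMulVec ψ (star ψ)
  -- `1 * ω` puts every term in the shape `M * ω * N` of `trace_mul_vecMulVec_mul`.
  have expand : (A * (A * ω - ω * A) - (A * ω - ω * A) * A) * H
      = (A * A) * ω * H - A * ω * (A * H) - A * ω * (A * H) + 1 * ω * (A * A * H) := by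
    noncomm_ring
  rw [expand]
  simp only [trace_add, trace_sub, ω, trace_mul_vecMulVec_mul, mul_one, ← mulVec_mulVec, heig,
    dotProduct_mulVec (star ψ) H, hH.star_vecMul_of_mulVec_eq_smul heig,
    star_mulVec_of_conjTranspose_eq_neg hA]
  simp only [mulVec_smul, dotProduct_smul, smul_dotProduct, neg_dotProduct, smul_eq_mul,
    ← dotProduct_mulVec]
  ring

end Matrix

theorem second_deriv_expectation_at_eigenstate_general {n : ℕ}
    (H A : Matrix (Fin n) (Fin n) ℂ) (ψ : Fin n → ℂ) (lam : ℝ)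
    (hH : H.IsHermitian)
    (heig : H *ᵥ ψ = (lam : ℂ) • ψ)
    (hA : Aᴴ = -A) :
    deriv (deriv (fun t : ℝ =>
        (exp (t • A) * vecMulVec ψ (star ψ) * exp (-(t • A)) * H).trace)) 0
      = 2 * (star (A *ᵥ ψ) ⬝ᵥ (H *ᵥ (A *ᵥ ψ))
          - (lam : ℂ) * (star (A *ᵥ ψ) ⬝ᵥ (A *ᵥ ψ))) := by
  rw [deriv_deriv_trace_exp_smul_mul_mul_exp_neg_smul_mul_zero]
  exact trace_double_commutator_vecMulVec_mul_of_mulVec_eq_smul hH heig hA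

/-- For a rank-one projection `ω = |ψ⟩⟨ψ|` with `Hψ = λψ` (`H` Hermitian) and
any skew-Hermitian `A`, the second derivative at `t = 0` of `t ↦ tr (e^{tA} ω e^{−tA} H)`
equals `2(⟨Aψ, H Aψ⟩ − λ⟨Aψ, Aψ⟩)`. -/
theorem second_deriv_expectation_at_eigenstate {n : ℕ}
    (H A : Matrix (Fin n) (Fin n) ℂ) (ψ : Fin n → ℂ) (lam : ℝ)
    (hH : H.IsHermitian)
    (hψ : star ψ ⬝ᵥ ψ = 1)
    (heig : H *ᵥ ψ = (lam : ℂ) • ψ)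
    (hA : Aᴴ = -A) :
    deriv (deriv (fun t : ℝ =>
        (exp (t • A) * vecMulVec ψ (star ψ) * exp (-(t • A)) * H).trace)) 0
      = 2 * (star (A *ᵥ ψ) ⬝ᵥ (H *ᵥ (A *ᵥ ψ))
          - (lam : ℂ) * (star (A *ᵥ ψ) ⬝ᵥ (A *ᵥ ψ))) :=
  second_deriv_expectation_at_eigenstate_general H A ψ lam hH heig hA
end

section
/- Let B, C be Hermitian matrices on ℂ^n such that C has all eigenvalues simple with pairwise distinct differences (strongly regular), and the matrix of B in the eigenbasis of C is irreducible (its off-diagonal support graph is connected). If additionally tr B = tr C = 0, then the real Lie algebra generated by iB and iC is su(n). -/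
open Matrix

attribute [local instance 100] LieRing.ofAssociativeRing

/-!
The bracket with `iC`, `C = diagonal c`, multiplies the entry `(a, b)` of a matrix by
`i (c_a - c_b)`, so a real polynomial `p` in `ad (iC)` multiplies it by `p (i (c_a - c_b))`.
Strong regularity makes `±(c_j - c_k)` the only differences with the square `(c_j - c_k)²`, so a
product of factors `X² + (c_a - c_b)²` kills every entry of `iB` except those at `(j, k)` and
`(k, j)`. Skew-Hermitian matrices supported there are `z E_jk - z̄ E_kj`, and two such
with `z`, `i (c_j - c_k) z` span all of them over `ℝ`: this gives every edge of the graph of `B`.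
Brackets `[z E_jb - z̄ E_bj, w E_bk - w̄ E_kb] = zw E_jk - conj(zw) E_kj` propagate along paths,
and `[E_jk - E_kj, i E_jk + i E_kj] = 2i (E_jj - E_kk)` supplies the traceless diagonal.
-/

open Complex ComplexConjugate Polynomial

lemma aeval_I_mul_prod_sq_add {α : Type*} (s : Finset α) (f : α → ℝ) (t : ℝ) :
    aeval (I * t) (∏ i ∈ s, (X ^ 2 + C (f i))) = ((∏ i ∈ s, (f i - t ^ 2) : ℝ) : ℂ) := by
  simp [map_prod, mul_pow, neg_add_eq_sub]

lemma LinearMap.apply_mem_of_mem_of_mul_mem {M : Type*} [AddCommGroup M] [Module ℝ M]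
    (f : ℂ →ₗ[ℝ] M) (S : Submodule ℝ M) {z δ : ℂ} (hz : z ≠ 0) (hδ : δ.im ≠ 0)
    (hfz : f z ∈ S) (hfδz : f (δ * z) ∈ S) (w : ℂ) : f w ∈ S := by
  set β := (w / z).im / δ.im
  have hw : w = ((w / z).re - β * δ.re : ℝ) • z + β • (δ * z) := by
    have hq : (((w / z).re - β * δ.re : ℝ) : ℂ) + β * δ = w / z := by
      apply Complex.ext <;> simp [β]
      field_simp
    calc w = w / z * z := (div_mul_cancel₀ w hz).symm
      _ = ((((w / z).re - β * δ.re : ℝ) : ℂ) + β * δ) * z := by rw [hq]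
      _ = _ := by rw [Complex.real_smul, Complex.real_smul]; ring
  rw [hw, map_add, map_smul, map_smul]
  exact S.add_mem (S.smul_mem _ hfz) (S.smul_mem _ hfδz)

section Regular

variable {ι : Type*} {c : ι → ℝ}
  (hreg : ∀ j k j' k' : ι, j ≠ k → j' ≠ k' → c j - c k = c j' - c k' → j = j' ∧ k = k')
include hreg

lemma sub_ne_zero_of_regular {a b : ι} (hab : a ≠ b) : c a - c b ≠ 0 :=
  fun h => hab (hreg a b b a hab hab.symm (by linarith)).1

lemma exists_poly_isolating_pair [Fintype ι] {j k : ι} (hjk : j ≠ k) :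
    ∃ p : ℝ[X], aeval (I * ↑(c j - c k)) p ≠ 0 ∧
      ∀ a b, aeval (I * ↑(c a - c b)) p ≠ 0 → a = j ∧ b = k ∨ a = k ∧ b = j := by
  classical
  set s := Finset.univ.filter fun q : ι × ι => (c q.1 - c q.2) ^ 2 ≠ (c j - c k) ^ 2
  refine ⟨∏ q ∈ s, (X ^ 2 + C ((c q.1 - c q.2) ^ 2)), ?_, fun a b h => ?_⟩
  · rw [aeval_I_mul_prod_sq_add, ofReal_ne_zero, Finset.prod_ne_zero_iff]
    exact fun q hq => sub_ne_zero.2 (Finset.mem_filter.1 hq).2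
  rw [aeval_I_mul_prod_sq_add, ofReal_ne_zero, Finset.prod_ne_zero_iff] at h
  have hsq : (c a - c b) ^ 2 = (c j - c k) ^ 2 := by
    by_contra hne
    exact h (a, b) (by simp [s, hne]) (sub_self _)
  rcases eq_or_ne a b with rfl | hab
  · rw [sub_self, zero_pow two_ne_zero, eq_comm, pow_eq_zero_iff two_ne_zero] at hsq
    exact absurd hsq (sub_ne_zero_of_regular hreg hjk)
  rcases sq_eq_sq_iff_eq_or_eq_neg.1 hsq with h' | h'
  · exact .inl (hreg a b j k hab hjk h')
  · exact .inr (hreg a b k j hab hjk.symm (by linarith))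

end Regular

namespace Matrix

variable {ι : Type*} [DecidableEq ι]

noncomputable def skewSingle (j k : ι) : ℂ →ₗ[ℝ] Matrix ι ι ℂ where
  toFun z := single j k z - single k j (conj z)
  map_add' z w := by simp only [map_add, single_add]; abel
  map_smul' r z := by simp [smul_sub, smul_single, Complex.real_smul]

lemma skewSingle_apply (j k : ι) (z : ℂ) :
    skewSingle j k z = single j k z - single k j (conj z) := rfl

lemma skewSingle_self (a : ι) (z : ℂ) : skewSingle a a z = z.im • skewSingle a a I := by
  ext x y
  simp only [skewSingle_apply, sub_apply, smul_apply, single_apply]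
  split_ifs <;> simp [Complex.ext_iff]

omit [DecidableEq ι] in
lemma conj_apply_eq_neg_of_conjTranspose_eq_neg {A : Matrix ι ι ℂ} (hA : Aᴴ = -A) (a b : ι) :
    conj (A b a) = -A a b := by
  simpa using congrFun₂ hA a b

lemma eq_skewSingle_of_support {A : Matrix ι ι ℂ} (hA : Aᴴ = -A) {j k : ι} (hjk : j ≠ k)
    (hsupp : ∀ a b, A a b ≠ 0 → a = j ∧ b = k ∨ a = k ∧ b = j) :
    A = skewSingle j k (A j k) := by
  ext a b
  rw [skewSingle_apply, sub_apply, single_apply, single_apply]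
  by_cases hjk' : a = j ∧ b = k
  · obtain ⟨rfl, rfl⟩ := hjk'
    simp [hjk]
  by_cases hkj : a = k ∧ b = j
  · obtain ⟨rfl, rfl⟩ := hkj
    simp [hjk, conj_apply_eq_neg_of_conjTranspose_eq_neg hA]
  have hab : A a b = 0 := not_imp_comm.mp (hsupp a b) (by tauto)
  rw [hab, if_neg (by tauto), if_neg (by tauto), sub_zero]

variable [Fintype ι]

lemma two_smul_eq_sum_skewSingle {A : Matrix ι ι ℂ} (hA : Aᴴ = -A) :
    (2 : ℝ) • A = ∑ a, ∑ b, skewSingle a b (A a b) := by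
  ext x y
  simp [skewSingle_apply, sum_apply, single_apply, conj_apply_eq_neg_of_conjTranspose_eq_neg hA,
    ite_and, two_mul]

lemma lie_skewSingle_skewSingle {j b k : ι} (hjb : j ≠ b) (hbk : b ≠ k) (hjk : j ≠ k) (z w : ℂ) :
    ⁅skewSingle j b z, skewSingle b k w⁆ = skewSingle j k (z * w) := by
  simp [skewSingle_apply, Ring.lie_def, sub_mul, mul_sub, hjb, hbk, hjk, hjb.symm, hbk.symm,
    hjk.symm, mul_comm]

lemma lie_skewSingle_one_I {j k : ι} (hjk : j ≠ k) :
    ⁅skewSingle j k 1, skewSingle j k I⁆ = skewSingle j j I - skewSingle k k I := by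
  simp [skewSingle_apply, Ring.lie_def, sub_mul, mul_sub, hjk, hjk.symm]
  abel

lemma lie_diagonal_eq_hadamard (d : ι → ℂ) (M : Matrix ι ι ℂ) :
    ⁅diagonal d, M⁆ = of (fun a b => d a - d b) ⊙ M := by
  ext a b
  simp [Ring.lie_def, hadamard_apply]
  ring

variable (ι) in
noncomputable def su : LieSubalgebra ℝ (Matrix ι ι ℂ) where
  carrier := {A | Aᴴ = -A ∧ A.trace = 0}
  add_mem' ha hb := ⟨by rw [conjTranspose_add, ha.1, hb.1, neg_add],
    by rw [trace_add, ha.2, hb.2, add_zero]⟩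
  zero_mem' := ⟨by simp, by simp⟩
  smul_mem' r A hA := ⟨by rw [conjTranspose_smul, star_trivial, hA.1, smul_neg],
    by rw [trace_smul, hA.2, smul_zero]⟩
  lie_mem' hx hy := ⟨by simp [Ring.lie_def, conjTranspose_mul, hx.1, hy.1],
    by rw [Ring.lie_def, trace_sub, trace_mul_comm, sub_self]⟩

lemma I_smul_mem_su {H : Matrix ι ι ℂ} (hH : H.IsHermitian) (htr : H.trace = 0) :
    I • H ∈ su ι :=
  ⟨by rw [conjTranspose_smul, hH.eq, star_def, conj_I, neg_smul],
    by rw [trace_smul, htr, smul_zero]⟩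

lemma su_le_of_skewSingle_mem (K : LieSubalgebra ℝ (Matrix ι ι ℂ))
    (hK : ∀ j k, j ≠ k → ∀ z, skewSingle j k z ∈ K) : su ι ≤ K := by
  rintro A ⟨hA, htr⟩
  cases isEmpty_or_nonempty ι
  · simp [Subsingleton.elim A 0]
  obtain ⟨j₀⟩ := ‹Nonempty ι›
  have hdiag (a : ι) : skewSingle a a I - skewSingle j₀ j₀ I ∈ K := by
    rcases eq_or_ne a j₀ with rfl | ha
    · simp
    · rw [← lie_skewSingle_one_I ha]
      exact K.lie_mem (hK _ _ ha 1) (hK _ _ ha I)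
  have him : ∑ a, (A a a).im = 0 := by
    simpa [trace, Complex.im_sum] using congrArg Complex.im htr
  -- the diagonal terms are rebased at `j₀`; the correction sums to `0` as `A` is traceless
  have hsum : (2 : ℝ) • A = ∑ a, ∑ b,
      (skewSingle a b (A a b) - (if a = b then (A a a).im else 0) • skewSingle j₀ j₀ I) := by
    simp [two_smul_eq_sum_skewSingle hA, Finset.sum_sub_distrib, ← Finset.sum_smul, him]
  have h2A : (2 : ℝ) • A ∈ K := hsum ▸ K.sum_mem fun a _ => K.sum_mem fun b _ => by
    rcases eq_or_ne a b with rfl | hab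
    · simpa [skewSingle_self a (A a a), ← smul_sub] using K.smul_mem (A a a).im (hdiag a)
    · simpa [hab] using hK a b hab (A a b)
  simpa using K.smul_mem (1 / 2 : ℝ) h2A

lemma hadamard_aeval_mem {K : LieSubalgebra ℝ (Matrix ι ι ℂ)} {d : ι → ℂ} (hd : diagonal d ∈ K)
    (p : ℝ[X]) {M : Matrix ι ι ℂ} (hM : M ∈ K) :
    of (fun a b => aeval (d a - d b) p) ⊙ M ∈ K := by
  induction p using Polynomial.induction_on with
  | C r =>
    convert K.smul_mem r hM using 1
    ext a b
    simp [hadamard_apply, Complex.real_smul]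
  | add p q hp hq =>
    convert K.add_mem hp hq using 1
    ext a b
    simp [hadamard_apply, add_mul]
  | monomial m r hm =>
    convert K.lie_mem hd hm using 1
    ext a b
    simp [lie_diagonal_eq_hadamard, hadamard_apply, pow_succ]
    ring

lemma skewSingle_mem_of_apply_ne_zero {K : LieSubalgebra ℝ (Matrix ι ι ℂ)} (hK : K ≤ su ι)
    {c : ι → ℝ}
    (hreg : ∀ j k j' k' : ι, j ≠ k → j' ≠ k' → c j - c k = c j' - c k' → j = j' ∧ k = k')
    (hC : diagonal (fun a => I * c a) ∈ K) {M : Matrix ι ι ℂ} (hM : M ∈ K) {j k : ι}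
    (hjk : j ≠ k) (hMjk : M j k ≠ 0) (w : ℂ) : skewSingle j k w ∈ K := by
  obtain ⟨p, hpjk, hp⟩ := exists_poly_isolating_pair hreg hjk
  have hδ (a b : ι) : I * ↑(c a) - I * ↑(c b) = I * ↑(c a - c b) := by push_cast; ring
  -- `hK` makes the isolated element skew-Hermitian, hence a `skewSingle j k`
  have hmem (q : ℝ[X]) (hq : ∀ a b, aeval (I * ↑(c a - c b)) q ≠ 0 →
      aeval (I * ↑(c a - c b)) p ≠ 0) :
      skewSingle j k (aeval (I * ↑(c j - c k)) q * M j k) ∈ K := by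
    have hY := hadamard_aeval_mem hC q hM
    rw [eq_skewSingle_of_support (hK hY).1 hjk fun a b hab => hp a b (hq a b ?_)] at hY
    · simpa [hadamard_apply, hδ] using hY
    · simpa [hadamard_apply, hδ] using left_ne_zero_of_mul hab
  set z := aeval (I * ↑(c j - c k)) p * M j k
  refine LinearMap.apply_mem_of_mem_of_mul_mem (skewSingle j k) K.toSubmodule
    (δ := I * ↑(c j - c k)) (mul_ne_zero hpjk hMjk) ?_ (hmem p fun _ _ => id) ?_ w
  · simpa using sub_ne_zero_of_regular hreg hjk
  · have h := hmem (p * X) fun a b h => left_ne_zero_of_mul (by rwa [map_mul] at h)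
    have hz : aeval (I * ↑(c j - c k)) (p * X) * M j k = I * ↑(c j - c k) * z := by
      rw [map_mul, aeval_X]
      ring
    rwa [hz] at h

lemma skewSingle_mem_of_reflTransGen {K : LieSubalgebra ℝ (Matrix ι ι ℂ)} {r : ι → ι → Prop}
    (hr : ∀ a b, r a b → ∀ z, skewSingle a b z ∈ K) {j k : ι}
    (hjk : Relation.ReflTransGen r j k) (hne : j ≠ k) (z : ℂ) : skewSingle j k z ∈ K := by
  induction hjk generalizing z with
  | refl => exact absurd rfl hne
  | @tail b k _ hbk ih =>
    by_cases hjb : j = b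
    · subst hjb
      exact hr _ _ hbk z
    by_cases hbk' : b = k
    · subst hbk'
      exact ih hjb z
    rw [← one_mul z, ← lie_skewSingle_skewSingle hjb hbk' hne]
    exact K.lie_mem (ih hjb 1) (hr _ _ hbk z)

end Matrix

theorem altafini_controllability_general {n : ℕ}
    (B : Matrix (Fin n) (Fin n) ℂ) (c : Fin n → ℝ)
    (hB : B.IsHermitian) (hBtr : B.trace = 0)
    (hCtr : (Matrix.diagonal fun j => (c j : ℂ)).trace = 0)
    -- the eigenvalue differences are pairwise distinct (non-degenerate resonance):
    (hreg : ∀ j k j' k' : Fin n, j ≠ k → j' ≠ k' →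
      c j - c k = c j' - c k' → j = j' ∧ k = k')
    -- the support graph of `B` in the eigenbasis of `C` is connected:
    (hconn : ∀ j k : Fin n, Relation.ReflTransGen (fun a b => a ≠ b ∧ B a b ≠ 0) j k) :
    (LieSubalgebra.lieSpan ℝ (Matrix (Fin n) (Fin n) ℂ)
        {Complex.I • B, Complex.I • Matrix.diagonal fun j => (c j : ℂ)} : Set _)
      = {A : Matrix (Fin n) (Fin n) ℂ | Aᴴ = -A ∧ A.trace = 0} := by
  set K := LieSubalgebra.lieSpan ℝ (Matrix (Fin n) (Fin n) ℂ)
    {Complex.I • B, Complex.I • Matrix.diagonal fun j => (c j : ℂ)}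
  have hBK : I • B ∈ K := LieSubalgebra.subset_lieSpan (Set.mem_insert _ _)
  have hCK : diagonal (fun a => I * c a) ∈ K :=
    LieSubalgebra.subset_lieSpan (Set.mem_insert_of_mem _ (diagonal_smul I _))
  have hKsu : K ≤ su (Fin n) := by
    refine LieSubalgebra.lieSpan_le.2 ?_
    rintro _ (rfl | rfl)
    · exact I_smul_mem_su hB hBtr
    · exact I_smul_mem_su (isHermitian_diagonal_of_self_adjoint _ (by ext; simp)) hCtr
  have hedge (a b : Fin n) (hab : a ≠ b ∧ B a b ≠ 0) (z : ℂ) : skewSingle a b z ∈ K :=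
    skewSingle_mem_of_apply_ne_zero hKsu hreg hCK hBK hab.1 (by simpa using hab.2) z
  exact subset_antisymm hKsu (su_le_of_skewSingle_mem K fun j k hjk =>
    skewSingle_mem_of_reflTransGen hedge (hconn j k) hjk)

/-- Altafini's controllability criterion: Let `C` be a traceless Hermitian
matrix, represented in its eigenbasis as `diagonal c` with simple eigenvalues whose pairwise
differences are distinct (strong regularity), and let `B` be a traceless Hermitian matrix
whose off-diagonal support graph (in the eigenbasis of `C`) is connected. Then the real Lie
algebra generated by `iB` and `iC` is `su(n)`, the traceless skew-Hermitian matrices. -/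
theorem altafini_controllability {n : ℕ}
    (B : Matrix (Fin n) (Fin n) ℂ) (c : Fin n → ℝ)
    (hB : B.IsHermitian) (hBtr : B.trace = 0)
    (hCtr : (Matrix.diagonal fun j => (c j : ℂ)).trace = 0)
    -- `C` has non-degenerate (simple) eigenvalues:
    (hinj : Function.Injective c)
    -- the eigenvalue differences are pairwise distinct (non-degenerate resonance):
    (hreg : ∀ j k j' k' : Fin n, j ≠ k → j' ≠ k' →
      c j - c k = c j' - c k' → j = j' ∧ k = k')
    -- the support graph of `B` in the eigenbasis of `C` is connected:
    (hconn : ∀ j k : Fin n, Relation.ReflTransGen (fun a b => a ≠ b ∧ B a b ≠ 0) j k) :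
    (LieSubalgebra.lieSpan ℝ (Matrix (Fin n) (Fin n) ℂ)
        {Complex.I • B, Complex.I • Matrix.diagonal fun j => (c j : ℂ)} : Set _)
      = {A : Matrix (Fin n) (Fin n) ℂ | Aᴴ = -A ∧ A.trace = 0} :=
  altafini_controllability_general B c hB hBtr hCtr hreg hconn
end
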